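/- Combinatorial selection step: let K ⊆ [0,1]² satisfy K ⊄ (A × [0,1]) ∪ ([0,1] × B) whenever λ(A) + λ(B) < α, for some α > 0. Then for every n with 2k/n < α (where k ≥ 1, k/n ∈ [α/3, α/2]), there exist distinct indices i₁,…,i_k ∈ {0,…,n−1} and distinct indices j₁,…,j_k ∈ {0,…,n−1} such that for each l, the square [i_l/n, (i_l+1)/n] × [j_l/n, (j_l+1)/n] intersects K. -/

import Mathlib

/-!
Cover the rows indexed by the cells already chosen by the union `A` of their strips, and likewise
the columns by `B`. While fewer than `k` pairs are chosen, `λ(A) + λ(B) ≤ 2k/n < α`, so some point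
of `K` lies outside both unions, and the grid cell containing it supplies a new row and a new
column. Repeating this `k` times gives the required indices.
-/

open MeasureTheory Finset

theorem exists_injective_pairs_of_forall_finset {α β : Type*} (R : α → β → Prop) (k : ℕ)
    (h : ∀ (I : Finset α) (J : Finset β), #I < k → #J < k → ∃ a ∉ I, ∃ b ∉ J, R a b) :
    ∃ i : Fin k → α, ∃ j : Fin k → β,
      Function.Injective i ∧ Function.Injective j ∧ ∀ l, R (i l) (j l) := by
  classical
  suffices ∀ m ≤ k, ∃ i : Fin m → α, ∃ j : Fin m → β,
      Function.Injective i ∧ Function.Injective j ∧ ∀ l, R (i l) (j l) from this k le_rfl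
  intro m
  induction m with
  | zero => exact fun _ ↦ ⟨Fin.elim0, Fin.elim0, Function.injective_of_subsingleton _,
      Function.injective_of_subsingleton _, fun l ↦ l.elim0⟩
  | succ m ih =>
    intro hm
    obtain ⟨i, j, hi, hj, hR⟩ := ih (Nat.le_of_succ_le hm)
    obtain ⟨a, ha, b, hb, hab⟩ := h (univ.image i) (univ.image j)
      (card_image_le.trans_lt (by simpa using hm)) (card_image_le.trans_lt (by simpa using hm))
    refine ⟨Fin.cons a i, Fin.cons b j, Fin.cons_injective_of_injective (by simpa using ha) hi,
      Fin.cons_injective_of_injective (by simpa using hb) hj, fun l ↦ ?_⟩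
    cases l using Fin.cases with
    | zero => simpa using hab
    | succ l => simpa using hR l

def gridCell (n i : ℕ) : Set ℝ := Set.Icc ((i : ℝ) / n) ((i + 1 : ℝ) / n)

theorem exists_mem_gridCell {n : ℕ} (hn : 0 < n) {x : ℝ} (hx : x ∈ Set.Icc (0 : ℝ) 1) :
    ∃ i : Fin n, x ∈ gridCell n i := by
  obtain ⟨hx0, hx1⟩ := hx
  have hn' : (0 : ℝ) < n := Nat.cast_pos.mpr hn
  have hnx : 0 ≤ (n : ℝ) * x := by positivity
  set i := min ⌊(n : ℝ) * x⌋₊ (n - 1)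
  have hlo : (i : ℝ) ≤ n * x :=
    (Nat.cast_le.mpr (min_le_left _ _)).trans (Nat.floor_le hnx)
  have hhi : (n : ℝ) * x ≤ i + 1 := by
    rcases min_cases ⌊(n : ℝ) * x⌋₊ (n - 1) with ⟨h, -⟩ | ⟨h, -⟩ <;> simp only [i, h]
    · exact (Nat.lt_floor_add_one _).le
    · rw [Nat.cast_sub hn, Nat.cast_one, sub_add_cancel]
      nlinarith
  refine ⟨⟨i, by omega⟩, ?_, ?_⟩
  · rw [div_le_iff₀ hn', mul_comm]
    exact hlo
  · rw [le_div_iff₀ hn', mul_comm]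
    exact hhi

theorem volume_gridCell (n i : ℕ) : volume (gridCell n i) = ENNReal.ofReal (1 / n) := by
  rw [gridCell, Real.volume_Icc]
  congr 1
  ring

theorem volume_biUnion_gridCell_le {n : ℕ} (S : Finset (Fin n)) :
    volume (⋃ i ∈ S, gridCell n i) ≤ ENNReal.ofReal (#S / n) :=
  calc volume (⋃ i ∈ S, gridCell n i)
      ≤ ∑ i ∈ S, volume (gridCell n i) := measure_biUnion_finset_le S _
    _ = #S * ENNReal.ofReal (1 / n) := by simp only [volume_gridCell, sum_const, nsmul_eq_mul]
    _ = ENNReal.ofReal (#S / n) := by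
      rw [← ENNReal.ofReal_natCast, ← ENNReal.ofReal_mul (by positivity), mul_one_div]

theorem exists_gridCell_prod_inter_nonempty_of_not_subset {K : Set (ℝ × ℝ)}
    (hKsub : K ⊆ Set.Icc (0 : ℝ) 1 ×ˢ Set.Icc (0 : ℝ) 1) {n : ℕ} (hn : 0 < n)
    (I J : Finset (Fin n))
    (hK : ¬ K ⊆ (⋃ i ∈ I, gridCell n i) ×ˢ Set.univ ∪ Set.univ ×ˢ (⋃ j ∈ J, gridCell n j)) :
    ∃ i ∉ I, ∃ j ∉ J, (gridCell n i ×ˢ gridCell n j ∩ K).Nonempty := by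
  obtain ⟨p, hpK, hp⟩ := Set.not_subset.mp hK
  simp only [Set.mem_union, Set.mem_prod, Set.mem_univ, and_true, true_and, not_or] at hp
  obtain ⟨hpI, hpJ⟩ := hp
  obtain ⟨i, hi⟩ := exists_mem_gridCell hn (hKsub hpK).1
  obtain ⟨j, hj⟩ := exists_mem_gridCell hn (hKsub hpK).2
  exact ⟨i, fun hiI ↦ hpI (Set.mem_biUnion hiI hi), j, fun hjJ ↦ hpJ (Set.mem_biUnion hjJ hj),
    p, ⟨hi, hj⟩, hpK⟩

theorem stmt15_general
    (K : Set (ℝ × ℝ)) (hKsub : K ⊆ Set.Icc (0 : ℝ) 1 ×ˢ Set.Icc (0 : ℝ) 1)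
    (α : ℝ)
    (hm : ∀ (A B : Set ℝ), MeasurableSet A → MeasurableSet B →
      volume.restrict (Set.Icc (0 : ℝ) 1) A + volume.restrict (Set.Icc (0 : ℝ) 1) B
        < ENNReal.ofReal α →
      ¬ K ⊆ (A ×ˢ Set.univ) ∪ (Set.univ ×ˢ B))
    (n k : ℕ)
    (h13 : α / 3 ≤ (k : ℝ) / n)
    (h2k : 2 * (k : ℝ) / n < α) :
    ∃ i j : Fin k → Fin n, Function.Injective i ∧ Function.Injective j ∧
      ∀ l : Fin k,
        ((Set.Icc ((i l : ℝ) / n) (((i l : ℕ) + 1 : ℝ) / n) ×ˢ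
          Set.Icc ((j l : ℝ) / n) (((j l : ℕ) + 1 : ℝ) / n)) ∩ K).Nonempty := by
  have hn : 0 < n := Nat.pos_of_ne_zero fun h ↦ by
    simp only [h, CharP.cast_eq_zero, div_zero] at h13 h2k
    linarith
  have hα : 0 < α := lt_of_le_of_lt (by positivity) h2k
  have hmeas (S : Finset (Fin n)) : MeasurableSet (⋃ i ∈ S, gridCell n i) :=
    S.measurableSet_biUnion fun _ _ ↦ measurableSet_Icc
  refine exists_injective_pairs_of_forall_finset _ k fun I J hI hJ ↦
    exists_gridCell_prod_inter_nonempty_of_not_subset hKsub hn I J <|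
      hm _ _ (hmeas I) (hmeas J) ?_
  calc _ ≤ volume (⋃ i ∈ I, gridCell n i) + volume (⋃ j ∈ J, gridCell n j) :=
        add_le_add (Measure.restrict_apply_le _ _) (Measure.restrict_apply_le _ _)
    _ ≤ ENNReal.ofReal (#I / n) + ENNReal.ofReal (#J / n) :=
        add_le_add (volume_biUnion_gridCell_le I) (volume_biUnion_gridCell_le J)
    _ = ENNReal.ofReal ((#I + #J) / n) := by
        rw [← ENNReal.ofReal_add (by positivity) (by positivity), add_div]
    _ ≤ ENNReal.ofReal (2 * k / n) := by
        gcongr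
        exact_mod_cast (show #I + #J ≤ 2 * k by omega)
    _ < ENNReal.ofReal α := (ENNReal.ofReal_lt_ofReal_iff hα).mpr h2k

theorem stmt15
    (K : Set (ℝ × ℝ)) (hKsub : K ⊆ Set.Icc (0 : ℝ) 1 ×ˢ Set.Icc (0 : ℝ) 1)
    (α : ℝ) (hα : 0 < α)
    (hm : ∀ (A B : Set ℝ), MeasurableSet A → MeasurableSet B →
      volume.restrict (Set.Icc (0 : ℝ) 1) A + volume.restrict (Set.Icc (0 : ℝ) 1) B
        < ENNReal.ofReal α →
      ¬ K ⊆ (A ×ˢ Set.univ) ∪ (Set.univ ×ˢ B))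
    (n k : ℕ) (hk : 1 ≤ k)
    (h13 : α / 3 ≤ (k : ℝ) / n) (h12 : (k : ℝ) / n ≤ α / 2)
    (h2k : 2 * (k : ℝ) / n < α) :
    ∃ i j : Fin k → Fin n, Function.Injective i ∧ Function.Injective j ∧
      ∀ l : Fin k,
        ((Set.Icc ((i l : ℝ) / n) (((i l : ℕ) + 1 : ℝ) / n) ×ˢ
          Set.Icc ((j l : ℝ) / n) (((j l : ℕ) + 1 : ℝ) / n)) ∩ K).Nonempty :=
  stmt15_general K hKsub α hm n k h13 h2k
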